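/- Let 0 < μ ≤ 1, ζ > 0, ϑ ≥ μζ, 0 < θ ≤ 1, λ > 0. Let (Ω, F, ℙ) be a probability space carrying i.i.d. real random variables Y₁, Y₂, … , set S_m = Y₁ + Y₂ + ⋯ + Y_m and F_m = ℙ[S_m ≤ y] for a fixed y ∈ ℝ, and let H : Ω → [0,∞) be a random variable with 𝔼[E_{μ,ϑ}^{ζ}(2λ H^θ)] < ∞. Define for u ≥ 0 the cdf of the fractional generalized compound process W(y,u) = 𝟙_{y ≥ 0} · Γ(ϑ) E_{μ,ϑ}^{ζ}(−λ u^θ) + ∑_{m=1}^∞ P(m,u) F_m. Then 𝔼[W(y,H)] = 𝟙_{y ≥ 0} Γ(ϑ) ∑_{k=0}^∞ ( (ζ)_k (−λ)^k / (k! Γ(μk+ϑ)) ) 𝔼[H^{θk}] + Γ(ϑ) ∑_{m=1}^∞ ( λ^m (ζ)_m / m! ) F_m ∑_{l=0}^∞ ( (ζ+m)_l (−λ)^l / (l! Γ(μ(l+m)+ϑ)) ) 𝔼[H^{θ(l+m)}], with all series converging absolutely. -/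

import Mathlib

open Real MeasureTheory ProbabilityTheory

/-- Rising factorial (Pochhammer symbol) `(ζ)_n = Γ(ζ+n)/Γ(ζ)`. -/
noncomputable def risingFactorial (ζ : ℝ) (n : ℕ) : ℝ :=
  Real.Gamma (ζ + n) / Real.Gamma ζ

/-- Three-parameter (Prabhakar) Mittag-Leffler function. -/
noncomputable def mittagLeffler (μ ϑ ζ z : ℝ) : ℝ :=
  ∑' m : ℕ, risingFactorial ζ m * z ^ m / (m.factorial * Real.Gamma (μ * m + ϑ))

/-- Probability function of the fractional counting process. -/
noncomputable def fcpP (μ ϑ ζ θ lam : ℝ) (n : ℕ) (t : ℝ) : ℝ :=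
  risingFactorial ζ n * Real.Gamma ϑ * (lam * t ^ θ) ^ n / n.factorial *
    ∑' k : ℕ, risingFactorial (ζ + n) k * (-(lam * t ^ θ)) ^ k /
      (k.factorial * Real.Gamma (μ * (n + k : ℕ) + ϑ))

/-!
Write `a_k` for the coefficients of `E_{μ,ϑ}^{ζ}` and `x = t^θ`. Since `(ζ)_n (ζ+n)_l = (ζ)_{l+n}`,
`P(n,t) = Γ(ϑ) ∑_l c_{n,l} x^{l+n}` with `|c_{n,l}| = C(l+n, n) a_{l+n} λ^{l+n}`, and
`F_0 = 𝟙_{y≥0}` makes the first term of `W(y,t)` the row `n = 0`. So `W(y,t)` is `Γ(ϑ)` times a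
double power series in `x` whose absolute values sum, along each antidiagonal `l + n = N`, to
`2^N a_N λ^N x^N`: the whole series is dominated by `Γ(ϑ) E(2λx)`. Integrability of `E(2λH^θ)`
therefore gives `∑_k a_k (2λ)^k 𝔼[H^{θk}] < ∞`, which justifies integrating term by term.

The Mittag-Leffler series converges everywhere by the ratio test: log-convexity of `Γ` gives
`Γ(x) (x+μ)^μ ≤ 2 Γ(x+μ)` for `x ≥ μ`, so `a_{k+1} / a_k = O(k^{-μ})`.
-/

open Filter

section Gamma

variable {ζ : ℝ}

lemma risingFactorial_pos (hζ : 0 < ζ) (n : ℕ) : 0 < risingFactorial ζ n :=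
  div_pos (Gamma_pos_of_pos (by positivity)) (Gamma_pos_of_pos hζ)

lemma risingFactorial_zero (hζ : 0 < ζ) : risingFactorial ζ 0 = 1 := by
  simp [risingFactorial, (Gamma_pos_of_pos hζ).ne']

lemma risingFactorial_succ (hζ : 0 < ζ) (n : ℕ) :
    risingFactorial ζ (n + 1) = risingFactorial ζ n * (ζ + n) := by
  rw [risingFactorial, risingFactorial, Nat.cast_succ, ← add_assoc,
    Gamma_add_one (by positivity)]
  ring

lemma risingFactorial_mul_risingFactorial_add (hζ : 0 < ζ) (n l : ℕ) :
    risingFactorial ζ n * risingFactorial (ζ + n) l = risingFactorial ζ (l + n) := by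
  have hn : Gamma (ζ + n) ≠ 0 := (Gamma_pos_of_pos (by positivity)).ne'
  rw [risingFactorial, risingFactorial, risingFactorial, Nat.cast_add, add_comm (l : ℝ),
    ← add_assoc]
  field_simp

lemma Gamma_add_one_le_Gamma_add_mul_rpow {x μ : ℝ} (hx : 0 < x) (hμ : 0 < μ) (hμ1 : μ ≤ 1) :
    Gamma (x + 1) ≤ Gamma (x + μ) * (x + μ) ^ (1 - μ) := by
  rcases hμ1.lt_or_eq with hμ1 | rfl
  · have hxμ : 0 < x + μ := by positivity
    have hG : 0 < Gamma (x + μ) := Gamma_pos_of_pos hxμ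
    calc Gamma (x + 1) = Gamma (μ * (x + μ) + (1 - μ) * (x + μ + 1)) := by ring_nf
      _ ≤ Gamma (x + μ) ^ μ * Gamma (x + μ + 1) ^ (1 - μ) :=
        Gamma_mul_add_mul_le_rpow_Gamma_mul_rpow_Gamma hxμ (by positivity) hμ
          (by linarith) (by ring)
      _ = Gamma (x + μ) * (x + μ) ^ (1 - μ) := by
        rw [Gamma_add_one hxμ.ne', mul_rpow hxμ.le hG.le, mul_left_comm, ← rpow_add hG,
          add_sub_cancel, rpow_one, mul_comm]
  · simp

lemma Gamma_mul_rpow_le_two_mul_Gamma_add {x μ : ℝ} (hμ : 0 < μ) (hμ1 : μ ≤ 1) (hx : μ ≤ x) :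
    Gamma x * (x + μ) ^ μ ≤ 2 * Gamma (x + μ) := by
  have hx0 : 0 < x := hμ.trans_le hx
  have hxμ : 0 < x + μ := by positivity
  have h := Gamma_add_one_le_Gamma_add_mul_rpow hx0 hμ hμ1
  rw [Gamma_add_one hx0.ne'] at h
  refine le_of_mul_le_mul_left ?_ hx0
  calc x * (Gamma x * (x + μ) ^ μ) = x * Gamma x * (x + μ) ^ μ := by ring
    _ ≤ Gamma (x + μ) * (x + μ) ^ (1 - μ) * (x + μ) ^ μ := by gcongr
    _ = Gamma (x + μ) * (x + μ) := by rw [mul_assoc, ← rpow_add hxμ, sub_add_cancel, rpow_one]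
    _ ≤ x * (2 * Gamma (x + μ)) := by nlinarith [Gamma_pos_of_pos hxμ]

end Gamma

section MittagLeffler

variable {μ ϑ ζ : ℝ}

noncomputable def mittagLefflerCoeff (μ ϑ ζ : ℝ) (k : ℕ) : ℝ :=
  risingFactorial ζ k / (k.factorial * Gamma (μ * k + ϑ))

lemma mittagLeffler_eq_tsum (μ ϑ ζ z : ℝ) :
    mittagLeffler μ ϑ ζ z = ∑' k, mittagLefflerCoeff μ ϑ ζ k * z ^ k :=
  tsum_congr fun k => by rw [mittagLefflerCoeff]; ring

lemma mittagLefflerCoeff_pos (hμ : 0 ≤ μ) (hϑ : 0 < ϑ) (hζ : 0 < ζ) (k : ℕ) :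
    0 < mittagLefflerCoeff μ ϑ ζ k :=
  div_pos (risingFactorial_pos hζ k) (mul_pos (by positivity) (Gamma_pos_of_pos (by positivity)))

lemma mittagLefflerCoeff_succ_mul_rpow_le (hμ : 0 < μ) (hμ1 : μ ≤ 1) (hϑ : 0 < ϑ) (hζ : 0 < ζ)
    {k : ℕ} (hk : 1 ≤ k) :
    mittagLefflerCoeff μ ϑ ζ (k + 1) * (μ * k + ϑ + μ) ^ μ ≤
      2 * (ζ + 1) * mittagLefflerCoeff μ ϑ ζ k := by
  set x := μ * k + ϑ
  have hG : 0 < Gamma x := Gamma_pos_of_pos (by positivity)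
  have hGμ : 0 < Gamma (x + μ) := Gamma_pos_of_pos (by positivity)
  have hrec : mittagLefflerCoeff μ ϑ ζ (k + 1) * (x + μ) ^ μ = mittagLefflerCoeff μ ϑ ζ k *
      ((ζ + k) / (k + 1)) * (Gamma x * (x + μ) ^ μ / Gamma (x + μ)) := by
    rw [mittagLefflerCoeff, mittagLefflerCoeff, risingFactorial_succ hζ, Nat.factorial_succ,
      show μ * ((k + 1 : ℕ) : ℝ) + ϑ = x + μ by push_cast; ring]
    push_cast
    field_simp
    simp only [x, mul_comm]
  have hk1 : (1 : ℝ) ≤ k := by exact_mod_cast hk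
  have hratio : (ζ + k) / (k + 1) ≤ ζ + 1 := by
    rw [div_le_iff₀ (by positivity)]; nlinarith
  have hGamma : Gamma x * (x + μ) ^ μ / Gamma (x + μ) ≤ 2 := by
    rw [div_le_iff₀ hGμ]
    exact Gamma_mul_rpow_le_two_mul_Gamma_add hμ hμ1 (by nlinarith)
  rw [hrec]
  calc mittagLefflerCoeff μ ϑ ζ k * ((ζ + k) / (k + 1)) * (Gamma x * (x + μ) ^ μ / Gamma (x + μ))
      ≤ mittagLefflerCoeff μ ϑ ζ k * (ζ + 1) * 2 := by
        have := (mittagLefflerCoeff_pos hμ.le hϑ hζ k).le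
        gcongr
    _ = 2 * (ζ + 1) * mittagLefflerCoeff μ ϑ ζ k := by ring

lemma summable_mittagLefflerCoeff_mul_pow (hμ : 0 < μ) (hμ1 : μ ≤ 1) (hϑ : 0 < ϑ) (hζ : 0 < ζ)
    (z : ℝ) :
    Summable fun k => mittagLefflerCoeff μ ϑ ζ k * z ^ k := by
  refine summable_of_ratio_norm_eventually_le (r := 1 / 2) (by norm_num) ?_
  have hQ : Tendsto (fun k : ℕ => (μ * k + ϑ + μ) ^ μ) atTop atTop :=
    (tendsto_rpow_atTop hμ).comp <| tendsto_atTop_add_const_right _ _ <|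
      tendsto_atTop_add_const_right _ _ <| tendsto_natCast_atTop_atTop.const_mul_atTop hμ
  filter_upwards [hQ.eventually_ge_atTop (4 * (ζ + 1) * |z|), eventually_ge_atTop 1]
    with k hQk hk
  have hrec := mittagLefflerCoeff_succ_mul_rpow_le hμ hμ1 hϑ hζ hk
  have ha := mittagLefflerCoeff_pos hμ.le hϑ hζ (k + 1)
  have hstep : mittagLefflerCoeff μ ϑ ζ (k + 1) * |z| ≤ 1 / 2 * mittagLefflerCoeff μ ϑ ζ k := by
    nlinarith [abs_nonneg z]
  simp only [norm_mul, norm_pow, Real.norm_eq_abs, abs_of_pos ha,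
    abs_of_pos (mittagLefflerCoeff_pos hμ.le hϑ hζ k), pow_succ]
  nlinarith [pow_nonneg (abs_nonneg z) k]

end MittagLeffler

section FCP

variable {μ ϑ ζ lam : ℝ}

noncomputable def fcpCoeff (μ ϑ ζ lam : ℝ) (n l : ℕ) : ℝ :=
  lam ^ n * risingFactorial ζ n / n.factorial *
    (risingFactorial (ζ + n) l * (-lam) ^ l / (l.factorial * Gamma (μ * ((l : ℝ) + n) + ϑ)))

lemma fcpP_eq_tsum (μ ϑ ζ θ lam : ℝ) (n : ℕ) (t : ℝ) :
    fcpP μ ϑ ζ θ lam n t = Gamma ϑ * ∑' l, fcpCoeff μ ϑ ζ lam n l * (t ^ θ) ^ (l + n) := by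
  rw [fcpP, ← tsum_mul_left, ← tsum_mul_left]
  refine tsum_congr fun l => ?_
  rw [fcpCoeff, Nat.cast_add, add_comm (n : ℝ)]
  ring

lemma fcpP_zero (hζ : 0 < ζ) (μ ϑ θ lam t : ℝ) :
    fcpP μ ϑ ζ θ lam 0 t = Gamma ϑ * mittagLeffler μ ϑ ζ (-(lam * t ^ θ)) := by
  simp [fcpP, mittagLeffler, risingFactorial_zero hζ]

lemma fcpCoeff_eq (hζ : 0 < ζ) (n l : ℕ) :
    fcpCoeff μ ϑ ζ lam n l =
      (-1) ^ l * ((l + n).choose n * (mittagLefflerCoeff μ ϑ ζ (l + n) * lam ^ (l + n))) := by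
  have hfact : ((l + n).choose n : ℝ) * l.factorial * n.factorial = (l + n).factorial := by
    exact_mod_cast Nat.add_choose_mul_factorial_mul_factorial l n
  have hchoose : ((l + n).choose n : ℝ) ≠ 0 := by
    exact_mod_cast (Nat.choose_pos (Nat.le_add_left n l)).ne'
  rw [fcpCoeff, mittagLefflerCoeff, ← risingFactorial_mul_risingFactorial_add hζ, ← hfact, neg_pow,
    Nat.cast_add]
  field_simp
  ring

lemma abs_fcpCoeff (hμ : 0 ≤ μ) (hϑ : 0 < ϑ) (hζ : 0 < ζ) (hlam : 0 ≤ lam) (n l : ℕ) :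
    |fcpCoeff μ ϑ ζ lam n l| =
      (l + n).choose n * (mittagLefflerCoeff μ ϑ ζ (l + n) * lam ^ (l + n)) := by
  rw [fcpCoeff_eq hζ, abs_mul, abs_neg_one_pow, one_mul,
    abs_of_nonneg (by have := mittagLefflerCoeff_pos hμ hϑ hζ (l + n); positivity)]

lemma summable_choose_mul {u : ℕ → ℝ} (hu : ∀ n, 0 ≤ u n) (h : Summable fun n => 2 ^ n * u n) :
    Summable fun p : ℕ × ℕ => ((p.2 + p.1).choose p.1 : ℝ) * u (p.2 + p.1) := by
  have hrow : ∀ i, HasSum (fun j => (i.choose j : ℝ) * u i) (2 ^ i * u i) := by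
    intro i
    have : HasSum (fun j => (i.choose j : ℝ) * u i)
        (∑ j ∈ Finset.range (i + 1), (i.choose j : ℝ) * u i) :=
      hasSum_sum_of_ne_finset_zero fun j hj => by
        rw [Nat.choose_eq_zero_of_lt (by simpa using hj), Nat.cast_zero, zero_mul]
    rwa [← Finset.sum_mul, ← Nat.cast_sum, Nat.sum_range_choose, Nat.cast_pow, Nat.cast_two]
      at this
  have hG : Summable fun q : ℕ × ℕ => (q.1.choose q.2 : ℝ) * u q.1 :=
    (summable_prod_of_nonneg fun q => mul_nonneg (Nat.cast_nonneg _) (hu _)).2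
      ⟨fun i => (hrow i).summable, h.congr fun i => (hrow i).tsum_eq.symm⟩
  refine hG.comp_injective (i := fun p : ℕ × ℕ => (p.2 + p.1, p.1)) fun p q hpq => ?_
  simp only [Prod.mk.injEq] at hpq
  ext <;> omega

lemma summable_abs_mul_fcpCoeff_mul (hμ : 0 ≤ μ) (hϑ : 0 < ϑ) (hζ : 0 < ζ) (hlam : 0 ≤ lam)
    {w : ℕ → ℝ} (hw : ∀ m, |w m| ≤ 1) {M : ℕ → ℝ} (hM0 : ∀ n, 0 ≤ M n)
    (hM : Summable fun n => mittagLefflerCoeff μ ϑ ζ n * (2 * lam) ^ n * M n) :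
    Summable fun p : ℕ × ℕ => |w p.1 * fcpCoeff μ ϑ ζ lam p.1 p.2| * M (p.2 + p.1) := by
  have hu : ∀ n, 0 ≤ mittagLefflerCoeff μ ϑ ζ n * lam ^ n * M n := fun n =>
    mul_nonneg (mul_nonneg (mittagLefflerCoeff_pos hμ hϑ hζ n).le (pow_nonneg hlam n)) (hM0 n)
  refine (summable_choose_mul hu (hM.congr fun n => by ring)).of_nonneg_of_le
    (fun p => mul_nonneg (abs_nonneg _) (hM0 _)) fun p => ?_
  calc |w p.1 * fcpCoeff μ ϑ ζ lam p.1 p.2| * M (p.2 + p.1)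
      ≤ 1 * |fcpCoeff μ ϑ ζ lam p.1 p.2| * M (p.2 + p.1) := by
        rw [abs_mul]; gcongr; exacts [hM0 _, hw _]
    _ = _ := by rw [one_mul, abs_fcpCoeff hμ hϑ hζ hlam]; ring

lemma summable_mul_fcpCoeff_mul (hμ : 0 ≤ μ) (hϑ : 0 < ϑ) (hζ : 0 < ζ) (hlam : 0 ≤ lam)
    {w : ℕ → ℝ} (hw : ∀ m, |w m| ≤ 1) {M : ℕ → ℝ} (hM0 : ∀ n, 0 ≤ M n)
    (hM : Summable fun n => mittagLefflerCoeff μ ϑ ζ n * (2 * lam) ^ n * M n) :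
    Summable fun p : ℕ × ℕ => w p.1 * fcpCoeff μ ϑ ζ lam p.1 p.2 * M (p.2 + p.1) :=
  .of_abs <| (summable_abs_mul_fcpCoeff_mul hμ hϑ hζ hlam hw hM0 hM).congr fun p => by
    rw [abs_mul _ (M _), abs_of_nonneg (hM0 _)]

lemma hasSum_fcpP_mul (hμ : 0 < μ) (hμ1 : μ ≤ 1) (hϑ : 0 < ϑ) (hζ : 0 < ζ) (hlam : 0 ≤ lam)
    (θ : ℝ) {w : ℕ → ℝ} (hw : ∀ m, |w m| ≤ 1) {t : ℝ} (ht : 0 ≤ t) :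
    HasSum (fun n => fcpP μ ϑ ζ θ lam n t * w n)
      (Gamma ϑ * ∑' p : ℕ × ℕ, w p.1 * fcpCoeff μ ϑ ζ lam p.1 p.2 * (t ^ θ) ^ (p.2 + p.1)) := by
  have hx : 0 ≤ t ^ θ := rpow_nonneg ht θ
  have hg := summable_mul_fcpCoeff_mul hμ.le hϑ hζ hlam hw (fun n => pow_nonneg hx n)
    ((summable_mittagLefflerCoeff_mul_pow hμ hμ1 hϑ hζ (2 * lam * t ^ θ)).congr fun n => by ring)
  refine (hg.hasSum.mul_left (Gamma ϑ)).prod_fiberwise fun n => ?_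
  convert (hg.prod_factor n).hasSum.mul_left (Gamma ϑ) using 1
  simp_rw [fcpP_eq_tsum, mul_assoc (w n), tsum_mul_left]
  ring

noncomputable def fgcpCdf (μ ϑ ζ θ lam y : ℝ) (F : ℕ → ℝ) (t : ℝ) : ℝ :=
  (if 0 ≤ y then Gamma ϑ * mittagLeffler μ ϑ ζ (-(lam * t ^ θ)) else 0) +
    ∑' m : ℕ, fcpP μ ϑ ζ θ lam (m + 1) t * F (m + 1)

lemma fgcpCdf_eq_tsum (hμ : 0 < μ) (hμ1 : μ ≤ 1) (hϑ : 0 < ϑ) (hζ : 0 < ζ) (hlam : 0 ≤ lam)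
    (θ : ℝ) {y : ℝ} {F : ℕ → ℝ} (hF : ∀ m, |F m| ≤ 1) (hF0 : F 0 = if 0 ≤ y then 1 else 0)
    {t : ℝ} (ht : 0 ≤ t) :
    fgcpCdf μ ϑ ζ θ lam y F t =
      Gamma ϑ * ∑' p : ℕ × ℕ, F p.1 * fcpCoeff μ ϑ ζ lam p.1 p.2 * (t ^ θ) ^ (p.2 + p.1) := by
  have h := hasSum_fcpP_mul hμ hμ1 hϑ hζ hlam θ hF ht
  rw [fgcpCdf, ← h.tsum_eq, h.summable.tsum_eq_zero_add, fcpP_zero hζ, hF0]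
  split_ifs <;> simp

lemma tsum_mul_fcpCoeff_mul_eq (hζ : 0 < ζ) {w M : ℕ → ℝ}
    (h : Summable fun p : ℕ × ℕ => w p.1 * fcpCoeff μ ϑ ζ lam p.1 p.2 * M (p.2 + p.1)) :
    ∑' p : ℕ × ℕ, w p.1 * fcpCoeff μ ϑ ζ lam p.1 p.2 * M (p.2 + p.1) =
      w 0 * ∑' k : ℕ, risingFactorial ζ k * (-lam) ^ k / (k.factorial * Gamma (μ * k + ϑ)) * M k +
      ∑' m : ℕ, lam ^ (m + 1) * risingFactorial ζ (m + 1) / (m + 1).factorial * w (m + 1) *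
        ∑' l : ℕ, risingFactorial (ζ + (m + 1)) l * (-lam) ^ l /
          (l.factorial * Gamma (μ * ((l : ℝ) + (m + 1)) + ϑ)) * M (l + (m + 1)) := by
  rw [h.tsum_prod, h.prod.tsum_eq_zero_add, ← tsum_mul_left]
  congr 1
  · refine tsum_congr fun l => ?_
    simp only [fcpCoeff, risingFactorial_zero hζ, Nat.factorial_zero, Nat.cast_zero, add_zero]
    ring
  · refine tsum_congr fun m => ?_
    rw [← tsum_mul_left]
    refine tsum_congr fun l => ?_
    simp only [fcpCoeff]
    push_cast
    ring

end FCP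

section Moments

variable {Ω : Type*} [MeasurableSpace Ω] {P : Measure Ω} {μ ϑ ζ lam c : ℝ} {s : Ω → ℝ}

lemma integrable_pow_of_integrable_mittagLeffler (hμ : 0 < μ) (hμ1 : μ ≤ 1) (hϑ : 0 < ϑ)
    (hζ : 0 < ζ) (hc : 0 < c) (hs : Measurable s) (hs0 : ∀ ω, 0 ≤ s ω)
    (hint : Integrable (fun ω => mittagLeffler μ ϑ ζ (c * s ω)) P) (n : ℕ) :
    Integrable (fun ω => s ω ^ n) P := by
  have hcoeff : 0 < mittagLefflerCoeff μ ϑ ζ n * c ^ n :=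
    mul_pos (mittagLefflerCoeff_pos hμ.le hϑ hζ n) (by positivity)
  have hterm : Integrable (fun ω => mittagLefflerCoeff μ ϑ ζ n * c ^ n * s ω ^ n) P := by
    refine hint.mono' ((hs.pow_const n).const_mul _).aestronglyMeasurable (ae_of_all _ fun ω => ?_)
    rw [Real.norm_of_nonneg (by have := hs0 ω; positivity), mittagLeffler_eq_tsum, mul_assoc,
      ← mul_pow]
    exact (summable_mittagLefflerCoeff_mul_pow hμ hμ1 hϑ hζ _).le_tsum n fun k _ =>
      mul_nonneg (mittagLefflerCoeff_pos hμ.le hϑ hζ k).le (by have := hs0 ω; positivity)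
  simpa only [inv_mul_cancel_left₀ hcoeff.ne'] using
    hterm.const_mul (mittagLefflerCoeff μ ϑ ζ n * c ^ n)⁻¹

lemma summable_mittagLefflerCoeff_mul_integral_pow (hμ : 0 < μ) (hμ1 : μ ≤ 1) (hϑ : 0 < ϑ)
    (hζ : 0 < ζ) (hc : 0 ≤ c) (hs : Measurable s) (hs0 : ∀ ω, 0 ≤ s ω)
    (hint : Integrable (fun ω => mittagLeffler μ ϑ ζ (c * s ω)) P) :
    Summable fun n => mittagLefflerCoeff μ ϑ ζ n * c ^ n * ∫ ω, s ω ^ n ∂P := by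
  have hterm0 : ∀ n ω, 0 ≤ mittagLefflerCoeff μ ϑ ζ n * (c * s ω) ^ n := fun n ω => by
    have := hs0 ω
    have := mittagLefflerCoeff_pos hμ.le hϑ hζ n
    positivity
  have := hasSum_integral_of_dominated_convergence
    (fun n ω => mittagLefflerCoeff μ ϑ ζ n * (c * s ω) ^ n)
    (fun n => ((hs.const_mul c).pow_const n).const_mul _ |>.aestronglyMeasurable)
    (fun n => ae_of_all _ fun ω => (Real.norm_of_nonneg (hterm0 n ω)).le)
    (ae_of_all _ fun ω => summable_mittagLefflerCoeff_mul_pow hμ hμ1 hϑ hζ _)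
    (by simpa only [← mittagLeffler_eq_tsum] using hint)
    (ae_of_all _ fun ω => (summable_mittagLefflerCoeff_mul_pow hμ hμ1 hϑ hζ _).hasSum)
  refine this.summable.congr fun n => ?_
  simp_rw [mul_pow, ← mul_assoc, integral_const_mul]

lemma integral_tsum_mul_pow {ι : Type*} [Countable ι] (hs0 : ∀ ω, 0 ≤ s ω)
    (hpow : ∀ n, Integrable (fun ω => s ω ^ n) P) {a : ι → ℝ} {k : ι → ℕ}
    (hsum : Summable fun i => |a i| * ∫ ω, s ω ^ k i ∂P) :
    ∫ ω, ∑' i, a i * s ω ^ k i ∂P = ∑' i, a i * ∫ ω, s ω ^ k i ∂P := by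
  rw [← integral_tsum_of_summable_integral_norm fun i => (hpow (k i)).const_mul (a i)]
  · simp_rw [integral_const_mul]
  · refine hsum.congr fun i => ?_
    simp_rw [norm_mul, Real.norm_eq_abs, abs_pow, abs_of_nonneg (hs0 _), integral_const_mul]

end Moments

theorem fgcp_levy_cdf_general {Ω : Type*} [MeasurableSpace Ω] (P : Measure Ω)
    [IsProbabilityMeasure P]
    (μ ϑ ζ θ lam : ℝ) (hμ : 0 < μ) (hμ1 : μ ≤ 1) (hζ : 0 < ζ) (hϑ : μ * ζ ≤ ϑ)
    (hlam : 0 < lam)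
    (X : ℕ → Ω → ℝ)
    (y : ℝ)
    (F : ℕ → ℝ) (hF : ∀ m, F m = (P {ω | ∑ i ∈ Finset.range m, X i ω ≤ y}).toReal)
    (H : Ω → ℝ) (hHm : Measurable H) (hH0 : ∀ ω, 0 ≤ H ω)
    (hint : Integrable (fun ω => mittagLeffler μ ϑ ζ (2 * lam * H ω ^ θ)) P)
    (W : ℝ → ℝ → ℝ)
    (hW : ∀ u, W y u = (if 0 ≤ y then Real.Gamma ϑ * mittagLeffler μ ϑ ζ (-(lam * u ^ θ))
        else 0) + ∑' m : ℕ, fcpP μ ϑ ζ θ lam (m + 1) u * F (m + 1)) :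
    (Summable fun k : ℕ =>
      |risingFactorial ζ k * (-lam) ^ k / (k.factorial * Real.Gamma (μ * k + ϑ)) *
        ∫ ω, H ω ^ (θ * (k : ℝ)) ∂P|) ∧
    (Summable fun p : ℕ × ℕ =>
      |lam ^ (p.1 + 1) * risingFactorial ζ (p.1 + 1) / (p.1 + 1).factorial * F (p.1 + 1) *
        (risingFactorial (ζ + (p.1 + 1)) p.2 * (-lam) ^ p.2 /
          (p.2.factorial * Real.Gamma (μ * ((p.2 : ℝ) + (p.1 + 1)) + ϑ))) *
        ∫ ω, H ω ^ (θ * ((p.2 : ℝ) + (p.1 + 1))) ∂P|) ∧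
    ((∫ ω, W y (H ω) ∂P)
      = (if 0 ≤ y then 1 else 0) * Real.Gamma ϑ *
          (∑' k : ℕ, risingFactorial ζ k * (-lam) ^ k /
            (k.factorial * Real.Gamma (μ * k + ϑ)) * ∫ ω, H ω ^ (θ * (k : ℝ)) ∂P)
        + Real.Gamma ϑ * ∑' m : ℕ,
            lam ^ (m + 1) * risingFactorial ζ (m + 1) / (m + 1).factorial * F (m + 1) *
              ∑' l : ℕ, risingFactorial (ζ + (m + 1)) l * (-lam) ^ l /
                (l.factorial * Real.Gamma (μ * ((l : ℝ) + (m + 1)) + ϑ)) *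
                ∫ ω, H ω ^ (θ * ((l : ℝ) + (m + 1))) ∂P) := by
  have hϑ0 : 0 < ϑ := (mul_pos hμ hζ).trans_le hϑ
  have hF1 (m : ℕ) : |F m| ≤ 1 := by
    rw [hF, abs_of_nonneg ENNReal.toReal_nonneg]; exact measureReal_le_one
  have hF0 : F 0 = if 0 ≤ y then 1 else 0 := by
    rw [hF]; split_ifs with hy <;> simp [hy]
  set s : Ω → ℝ := fun ω => H ω ^ θ
  have hs0 (ω : Ω) : 0 ≤ s ω := rpow_nonneg (hH0 ω) θ
  have hsm : Measurable s := hHm.pow_const θ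
  have hmoment (n : ℕ) : ∫ ω, H ω ^ (θ * n) ∂P = ∫ ω, s ω ^ n ∂P :=
    integral_congr_ae (ae_of_all _ fun ω => by simp only [s, rpow_mul (hH0 ω), rpow_natCast])
  have hM0 (n : ℕ) : 0 ≤ ∫ ω, s ω ^ n ∂P := integral_nonneg fun ω => pow_nonneg (hs0 ω) n
  have hM := summable_mittagLefflerCoeff_mul_integral_pow hμ hμ1 hϑ0 hζ (by positivity) hsm hs0 hint
  have hsum (w : ℕ → ℝ) (hw : ∀ m, |w m| ≤ 1) :=
    summable_abs_mul_fcpCoeff_mul hμ.le hϑ0 hζ hlam.le hw hM0 hM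
  refine ⟨?_, ?_, ?_⟩
  · refine ((hsum (fun _ => 1) fun _ => by simp).prod_factor 0).congr fun k => ?_
    simp [fcpCoeff, hmoment, abs_mul, risingFactorial_zero hζ, abs_of_nonneg (hM0 _)]
  · refine ((hsum F hF1).comp_injective (i := fun p : ℕ × ℕ => (p.1 + 1, p.2))
      fun p q h => by simpa [Prod.ext_iff] using h).congr fun p => ?_
    rw [Function.comp_apply, ← abs_of_nonneg (hM0 _), ← abs_mul, ← hmoment]
    simp only [fcpCoeff]
    push_cast
    ring_nf
  · rw [integral_congr_ae (ae_of_all _ fun ω => (hW (H ω)).trans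
        (fgcpCdf_eq_tsum hμ hμ1 hϑ0 hζ hlam.le θ hF1 hF0 (hH0 ω))), integral_const_mul,
      integral_tsum_mul_pow hs0
        (integrable_pow_of_integrable_mittagLeffler hμ hμ1 hϑ0 hζ (by positivity) hsm hs0 hint)
        (hsum F hF1),
      tsum_mul_fcpCoeff_mul_eq hζ (M := fun n => ∫ ω, s ω ^ n ∂P)
        (summable_mul_fcpCoeff_mul hμ.le hϑ0 hζ hlam.le hF1 hM0 hM), hF0]
    simp only [← hmoment]
    push_cast
    ring

/-- Cdf of the fractional generalized compound process at Lévy times: with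
`F_m = ℙ[Y₁+⋯+Y_m ≤ y]` and `W(y,u) = 𝟙_{y≥0} Γ(ϑ)E_{μ,ϑ}^{ζ}(−λu^θ) + ∑_{m≥1} P(m,u)F_m`,
one has `𝔼[W(y,H)] = 𝟙_{y≥0} Γ(ϑ) ∑_k (ζ)_k(−λ)^k/(k!Γ(μk+ϑ)) 𝔼[H^{θk}]
 + Γ(ϑ) ∑_{m≥1} (λ^m(ζ)_m/m!) F_m ∑_l (ζ+m)_l(−λ)^l/(l!Γ(μ(l+m)+ϑ)) 𝔼[H^{θ(l+m)}]`. -/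
theorem fgcp_levy_cdf {Ω : Type*} [MeasurableSpace Ω] (P : Measure Ω)
    [IsProbabilityMeasure P]
    (μ ϑ ζ θ lam : ℝ) (hμ : 0 < μ) (hμ1 : μ ≤ 1) (hζ : 0 < ζ) (hϑ : μ * ζ ≤ ϑ)
    (hθ : 0 < θ) (hθ1 : θ ≤ 1) (hlam : 0 < lam)
    (X : ℕ → Ω → ℝ) (hXm : ∀ i, Measurable (X i))
    (hXindep : iIndepFun X P)
    (hXid : ∀ i, IdentDistrib (X i) (X 0) P P)
    (y : ℝ)
    (F : ℕ → ℝ) (hF : ∀ m, F m = (P {ω | ∑ i ∈ Finset.range m, X i ω ≤ y}).toReal)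
    (H : Ω → ℝ) (hHm : Measurable H) (hH0 : ∀ ω, 0 ≤ H ω)
    (hint : Integrable (fun ω => mittagLeffler μ ϑ ζ (2 * lam * H ω ^ θ)) P)
    (W : ℝ → ℝ → ℝ)
    (hW : ∀ u, W y u = (if 0 ≤ y then Real.Gamma ϑ * mittagLeffler μ ϑ ζ (-(lam * u ^ θ))
        else 0) + ∑' m : ℕ, fcpP μ ϑ ζ θ lam (m + 1) u * F (m + 1)) :
    (Summable fun k : ℕ =>
      |risingFactorial ζ k * (-lam) ^ k / (k.factorial * Real.Gamma (μ * k + ϑ)) *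
        ∫ ω, H ω ^ (θ * (k : ℝ)) ∂P|) ∧
    (Summable fun p : ℕ × ℕ =>
      |lam ^ (p.1 + 1) * risingFactorial ζ (p.1 + 1) / (p.1 + 1).factorial * F (p.1 + 1) *
        (risingFactorial (ζ + (p.1 + 1)) p.2 * (-lam) ^ p.2 /
          (p.2.factorial * Real.Gamma (μ * ((p.2 : ℝ) + (p.1 + 1)) + ϑ))) *
        ∫ ω, H ω ^ (θ * ((p.2 : ℝ) + (p.1 + 1))) ∂P|) ∧
    ((∫ ω, W y (H ω) ∂P)
      = (if 0 ≤ y then 1 else 0) * Real.Gamma ϑ *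
          (∑' k : ℕ, risingFactorial ζ k * (-lam) ^ k /
            (k.factorial * Real.Gamma (μ * k + ϑ)) * ∫ ω, H ω ^ (θ * (k : ℝ)) ∂P)
        + Real.Gamma ϑ * ∑' m : ℕ,
            lam ^ (m + 1) * risingFactorial ζ (m + 1) / (m + 1).factorial * F (m + 1) *
              ∑' l : ℕ, risingFactorial (ζ + (m + 1)) l * (-lam) ^ l /
                (l.factorial * Real.Gamma (μ * ((l : ℝ) + (m + 1)) + ϑ)) *
                ∫ ω, H ω ^ (θ * ((l : ℝ) + (m + 1))) ∂P) :=
  fgcp_levy_cdf_general P μ ϑ ζ θ lam hμ hμ1 hζ hϑ hlam X y F hF H hHm hH0 hint W hW
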